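/- Let 𝒜 be a C*-algebra, 𝒥 a closed two-sided ideal of 𝒜, and a, b ∈ 𝒥. Then for every n ≥ 1: hₙ(M_{a,b}^𝒥) ≤ hₙ(M_{a,b}) ≤ aₙ(M_{a,b}) ≤ aₙ(M_{a,b}^𝒥). -/

import Mathlib

open scoped BigOperators

noncomputable section

/-- The space of complex null sequences `c₀`. -/
def c0 : Set (ℕ → ℂ) := {α | Filter.Tendsto α Filter.atTop (nhds 0)}

/-- `rearrSum α n` is the supremum of `∑_{i ∈ F} |α i|` over finite sets `F ⊆ ℕ` with
`|F| = n`; for a null sequence it equals `α*₁ + ⋯ + α*ₙ` where `α*` is the decreasing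
rearrangement of `(|α_n|)`. -/
def rearrSum (α : ℕ → ℂ) (n : ℕ) : ℝ :=
  sSup ((fun F : Finset ℕ => ∑ i ∈ F, ‖α i‖) '' {F | F.card = n})

/-- The decreasing rearrangement of a null sequence, 0-indexed:
`rearr α n = α*_{n+1}`. -/
def rearr (α : ℕ → ℂ) (n : ℕ) : ℝ := rearrSum α (n + 1) - rearrSum α n

/-- A Calkin space: a linear subspace of `c₀` containing every null sequence whose
decreasing rearrangement is dominated termwise by that of one of its members. -/
def IsCalkinSpace (I : Set (ℕ → ℂ)) : Prop :=
  I ⊆ c0 ∧ (0 : ℕ → ℂ) ∈ I ∧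
  (∀ α ∈ I, ∀ β ∈ I, α + β ∈ I) ∧
  (∀ (c : ℂ), ∀ α ∈ I, c • α ∈ I) ∧
  (∀ α ∈ I, ∀ β ∈ c0, (∀ n, rearr β n ≤ rearr α n) → β ∈ I)

/-- `tensorSum α β n` is the supremum of `∑_{(i,j) ∈ F} |α i| |β j|` over finite
`F ⊆ ℕ × ℕ` with `|F| = n`; it equals `(α⊗β)₁ + ⋯ + (α⊗β)ₙ`. -/
def tensorSum (α β : ℕ → ℂ) (n : ℕ) : ℝ :=
  sSup ((fun F : Finset (ℕ × ℕ) => ∑ p ∈ F, ‖α p.1‖ * ‖β p.2‖) '' {F | F.card = n})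

/-- The tensor sequence `α⊗β`: the decreasing rearrangement of the double sequence
`(|α_m β_n|)_{m,n}`, 0-indexed: `tensorSeq α β n = (α⊗β)_{n+1}`. -/
def tensorSeq (α β : ℕ → ℂ) (n : ℕ) : ℝ := tensorSum α β (n + 1) - tensorSum α β n

/-- Embedding of real sequences into complex sequences. -/
def toC (f : ℕ → ℝ) : ℕ → ℂ := fun n => (f n : ℂ)

/-- The tensor product `𝔦⊗𝔧` of two Calkin spaces: the smallest Calkin space
containing `α⊗β` for all `α ∈ 𝔦`, `β ∈ 𝔧`. -/
def calkinTensor (I J : Set (ℕ → ℂ)) : Set (ℕ → ℂ) :=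
  ⋂₀ {K | IsCalkinSpace K ∧ ∀ α ∈ I, ∀ β ∈ J, toC (tensorSeq α β) ∈ K}

/-- A Calkin space `𝔦` is stable if `𝔦⊗𝔦 = 𝔦`. -/
def IsStableCalkin (I : Set (ℕ → ℂ)) : Prop := IsCalkinSpace I ∧ calkinTensor I I = I

/-- The principal Calkin space `⟨α⟩` generated by `α`: the smallest Calkin space
containing `α`. -/
def principalCalkin (α : ℕ → ℂ) : Set (ℕ → ℂ) := ⋂₀ {K | IsCalkinSpace K ∧ α ∈ K}

/-- `Kw ω α n = #{m : ω^{n+1} < α m ≤ ω^n}` (the sequence `α` being 0-indexed). -/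
def Kw (ω : ℝ) (α : ℕ → ℝ) (n : ℕ) : ℕ :=
  Set.ncard {m : ℕ | ω ^ (n + 1) < α m ∧ α m ≤ ω ^ n}

/-- `K̃ₙ = Σ_{i=0}^n Kᵢ`. -/
def Ktil (ω : ℝ) (α : ℕ → ℝ) (n : ℕ) : ℕ := ∑ i ∈ Finset.range (n + 1), Kw ω α i

/-- `Mₙ = Σ_{i+j=n} Kᵢ Kⱼ`. -/
def Mw (ω : ℝ) (α : ℕ → ℝ) (n : ℕ) : ℕ :=
  ∑ i ∈ Finset.range (n + 1), Kw ω α i * Kw ω α (n - i)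

/-- `M̃ₙ = Σ_{i=0}^n Mᵢ`. -/
def Mtil (ω : ℝ) (α : ℕ → ℝ) (n : ℕ) : ℕ := ∑ i ∈ Finset.range (n + 1), Mw ω α i

/-- The `n`-th approximation number of `T` (1-indexed: `approxNum T n = aₙ(T)` is the
infimum of `‖T - F‖` over bounded operators `F` of rank `< n`).  For operators between
Hilbert spaces this equals the `n`-th singular number. -/
def approxNum {X Y : Type*} [NormedAddCommGroup X] [NormedSpace ℂ X]
    [NormedAddCommGroup Y] [NormedSpace ℂ Y] (T : X →L[ℂ] Y) (n : ℕ) : ℝ :=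
  sInf {c | ∃ F : X →L[ℂ] Y, LinearMap.rank (F : X →ₗ[ℂ] Y) < (n : Cardinal) ∧ c = ‖T - F‖}

/-- The `n`-th Kolmogorov number `dₙ(T)` (1-indexed). -/
def kolNum {X Y : Type*} [NormedAddCommGroup X] [NormedSpace ℂ X]
    [NormedAddCommGroup Y] [NormedSpace ℂ Y] (T : X →L[ℂ] Y) (n : ℕ) : ℝ :=
  sInf {c | ∃ V : Submodule ℂ Y, Module.rank ℂ V < (n : Cardinal) ∧
    c = ⨆ x : {x : X // ‖x‖ ≤ 1}, ⨅ y : V, ‖T x.1 - (y : Y)‖}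

/-- The `n`-th Hilbert number `hₙ(T)` (1-indexed): the supremum of `sₙ(A ∘ T ∘ B)` over
all Hilbert spaces `K`, `H'` and all contractions `B : K → X`, `A : Y → H'`. -/
def hilbertNum {X Y : Type u} [NormedAddCommGroup X] [NormedSpace ℂ X]
    [NormedAddCommGroup Y] [NormedSpace ℂ Y] (T : X →L[ℂ] Y) (n : ℕ) : ℝ :=
  sSup {c | ∃ (K : Type u) (_ : NormedAddCommGroup K) (_ : InnerProductSpace ℂ K)
    (_ : CompleteSpace K) (H' : Type u) (_ : NormedAddCommGroup H')
    (_ : InnerProductSpace ℂ H') (_ : CompleteSpace H')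
    (B : K →L[ℂ] X) (A : Y →L[ℂ] H'), ‖B‖ ≤ 1 ∧ ‖A‖ ≤ 1 ∧
    c = approxNum ((A.comp T).comp B) n}

/-- The sequence of singular numbers of an operator, 0-indexed:
`sSeq T n = s_{n+1}(T) = a_{n+1}(T)`. -/
def sSeq {X Y : Type*} [NormedAddCommGroup X] [NormedSpace ℂ X]
    [NormedAddCommGroup Y] [NormedSpace ℂ Y] (T : X →L[ℂ] Y) : ℕ → ℝ :=
  fun n => approxNum T (n + 1)

/-- The multiplication operator `M_{a,b} : x ↦ a * x * b` on a normed algebra. -/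
def Mop {A : Type*} [NonUnitalNormedRing A] [NormedSpace ℂ A] [IsScalarTower ℂ A A]
    [SMulCommClass ℂ A A] (a b : A) : A →L[ℂ] A :=
  (ContinuousLinearMap.mul ℂ A a).comp ((ContinuousLinearMap.mul ℂ A).flip b)

/-!
For `a, b ∈ 𝒥` and `ε > 0`, the element `e = m (m + ε²)⁻¹` with `m = a a⋆ + a⋆ a + b b⋆ + b⋆ b`
is a contraction, lies in `𝒥` because `ε² e = m - e m`, and `e a, a e, e b, b e` are `ε`-close to
`a, b`: conjugating `a a⋆ ≤ m` by `1 - e` gives `‖(1 - e) a‖² ≤ ‖(1 - e) m (1 - e)‖ ≤ ε²`, and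
similarly on the other sides. Hence, with `ι : 𝒥 → 𝒜` the inclusion and `M_{e,e} : 𝒜 → 𝒥`, the
operator `M_{a,b}^𝒥` is `O(ε)`-close to `M_{e,e} ∘ M_{a,b} ∘ ι` and `M_{a,b}` is `O(ε)`-close to
`ι ∘ M_{a,b}^𝒥 ∘ M_{e,e}`. Both `aₙ` and `hₙ` are `1`-Lipschitz in the operator and do not grow
under composition with contractions, which gives the two outer inequalities; `hₙ ≤ aₙ` holds for
every operator.
-/

section SNumbers

universe v

open ContinuousLinearMap

variable {W X Y Z : Type v} [NormedAddCommGroup W] [NormedSpace ℂ W]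
  [NormedAddCommGroup X] [NormedSpace ℂ X] [NormedAddCommGroup Y] [NormedSpace ℂ Y]
  [NormedAddCommGroup Z] [NormedSpace ℂ Z]

lemma norm_comp_comp_le_of_norm_le_one {B : W →L[ℂ] X} {A : Y →L[ℂ] Z} (hB : ‖B‖ ≤ 1)
    (hA : ‖A‖ ≤ 1) (T : X →L[ℂ] Y) : ‖(A.comp T).comp B‖ ≤ ‖T‖ :=
  calc ‖(A.comp T).comp B‖ ≤ ‖A‖ * ‖T‖ * ‖B‖ :=
        (opNorm_comp_le _ _).trans (mul_le_mul_of_nonneg_right (opNorm_comp_le _ _) (norm_nonneg _))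
    _ ≤ 1 * ‖T‖ * 1 := by gcongr
    _ = ‖T‖ := by ring

@[simp] lemma approxNum_zero (T : X →L[ℂ] Y) : approxNum T 0 = 0 := by
  rw [approxNum, Nat.cast_zero]
  simp only [not_lt_zero, false_and, exists_false, Set.ofPred_false, Real.sInf_empty]

lemma approxNum_nonneg (T : X →L[ℂ] Y) (n : ℕ) : 0 ≤ approxNum T n :=
  Real.sInf_nonneg <| by
    rintro _ ⟨F, -, rfl⟩
    exact norm_nonneg _

lemma approxNum_le_norm_sub (T F : X →L[ℂ] Y) {n : ℕ}
    (hF : LinearMap.rank (F : X →ₗ[ℂ] Y) < n) : approxNum T n ≤ ‖T - F‖ :=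
  csInf_le ⟨0, by rintro _ ⟨F, -, rfl⟩; exact norm_nonneg _⟩ ⟨F, hF, rfl⟩

lemma le_approxNum {T : X →L[ℂ] Y} {n : ℕ} (hn : n ≠ 0) {c : ℝ}
    (h : ∀ F : X →L[ℂ] Y, LinearMap.rank (F : X →ₗ[ℂ] Y) < n → c ≤ ‖T - F‖) :
    c ≤ approxNum T n := by
  refine le_csInf ⟨_, 0, ?_, rfl⟩ ?_
  · simpa using Nat.pos_of_ne_zero hn
  · rintro _ ⟨F, hF, rfl⟩
    exact h F hF

lemma approxNum_le_add_norm_sub (S R : X →L[ℂ] Y) (n : ℕ) :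
    approxNum S n ≤ approxNum R n + ‖S - R‖ := by
  rcases eq_or_ne n 0 with rfl | hn
  · simp
  rw [← sub_le_iff_le_add]
  refine le_approxNum hn fun F hF => ?_
  calc approxNum S n - ‖S - R‖ ≤ ‖S - F‖ - ‖S - R‖ := by
        gcongr; exact approxNum_le_norm_sub S F hF
    _ ≤ ‖R - F‖ := by
        rw [sub_le_iff_le_add', ← sub_add_sub_cancel S R F]; exact norm_add_le _ _

lemma approxNum_comp_comp_le {B : W →L[ℂ] X} {A : Y →L[ℂ] Z} (hB : ‖B‖ ≤ 1) (hA : ‖A‖ ≤ 1)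
    (T : X →L[ℂ] Y) (n : ℕ) : approxNum ((A.comp T).comp B) n ≤ approxNum T n := by
  rcases eq_or_ne n 0 with rfl | hn
  · simp
  refine le_approxNum hn fun F hF => ?_
  have hrank : LinearMap.rank (((A.comp F).comp B : W →L[ℂ] Z) : W →ₗ[ℂ] Z) < n :=
    ((LinearMap.rank_comp_le_left _ _).trans (LinearMap.rank_comp_le_right _ _)).trans_lt hF
  calc approxNum ((A.comp T).comp B) n ≤ ‖(A.comp T).comp B - (A.comp F).comp B‖ :=
        approxNum_le_norm_sub _ _ hrank
    _ = ‖(A.comp (T - F)).comp B‖ := by rw [comp_sub, sub_comp]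
    _ ≤ ‖T - F‖ := norm_comp_comp_le_of_norm_le_one hB hA _

def ApproxFactorsThrough (S : X →L[ℂ] Y) (R : W →L[ℂ] Z) : Prop :=
  ∀ ε > 0, ∃ (B : X →L[ℂ] W) (A : Z →L[ℂ] Y), ‖B‖ ≤ 1 ∧ ‖A‖ ≤ 1 ∧ ‖S - (A.comp R).comp B‖ ≤ ε

lemma approxNum_le_of_approxFactorsThrough {S : X →L[ℂ] Y} {R : W →L[ℂ] Z}
    (h : ApproxFactorsThrough S R) (n : ℕ) : approxNum S n ≤ approxNum R n := by
  refine le_of_forall_pos_le_add fun ε hε => ?_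
  obtain ⟨B, A, hB, hA, hSR⟩ := h ε hε
  calc approxNum S n ≤ approxNum ((A.comp R).comp B) n + ‖S - (A.comp R).comp B‖ :=
        approxNum_le_add_norm_sub _ _ n
    _ ≤ approxNum R n + ε := add_le_add (approxNum_comp_comp_le hB hA R n) hSR

lemma approxNum_le_hilbertNum {K H : Type v} [NormedAddCommGroup K] [InnerProductSpace ℂ K]
    [CompleteSpace K] [NormedAddCommGroup H] [InnerProductSpace ℂ H] [CompleteSpace H]
    {B : K →L[ℂ] X} {A : Y →L[ℂ] H} (hB : ‖B‖ ≤ 1) (hA : ‖A‖ ≤ 1) (T : X →L[ℂ] Y) (n : ℕ) :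
    approxNum ((A.comp T).comp B) n ≤ hilbertNum T n := by
  refine le_csSup ⟨approxNum T n, ?_⟩ ⟨K, _, _, ‹_›, H, _, _, ‹_›, B, A, hB, hA, rfl⟩
  rintro _ ⟨K', _, _, _, H', _, _, _, B', A', hB', hA', rfl⟩
  exact approxNum_comp_comp_le hB' hA' T n

lemma hilbertNum_nonneg (T : X →L[ℂ] Y) (n : ℕ) : 0 ≤ hilbertNum T n :=
  (approxNum_nonneg _ n).trans <|
    approxNum_le_hilbertNum (K := PUnit) (H := PUnit) (B := 0) (A := 0) (by simp) (by simp) T n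

lemma hilbertNum_le_approxNum (T : X →L[ℂ] Y) (n : ℕ) : hilbertNum T n ≤ approxNum T n :=
  Real.sSup_le (fun _ ⟨_, _, _, _, _, _, _, _, _, _, hB, hA, hc⟩ =>
    hc ▸ approxNum_comp_comp_le hB hA T n) (approxNum_nonneg T n)

lemma hilbertNum_le_of_approxFactorsThrough {S : X →L[ℂ] Y} {R : W →L[ℂ] Z}
    (h : ApproxFactorsThrough S R) (n : ℕ) : hilbertNum S n ≤ hilbertNum R n := by
  refine le_of_forall_pos_le_add fun ε hε => ?_
  obtain ⟨B, A, hB, hA, hSR⟩ := h ε hε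
  refine Real.sSup_le ?_ (add_nonneg (hilbertNum_nonneg R n) hε.le)
  rintro _ ⟨K, _, _, _, H, _, _, _, B', A', hB', hA', rfl⟩
  have hBB' : ‖B.comp B'‖ ≤ 1 := (opNorm_comp_le _ _).trans (mul_le_one₀ hB (norm_nonneg _) hB')
  have hA'A : ‖A'.comp A‖ ≤ 1 := (opNorm_comp_le _ _).trans (mul_le_one₀ hA' (norm_nonneg _) hA)
  calc approxNum ((A'.comp S).comp B') n
      ≤ approxNum (((A'.comp A).comp R).comp (B.comp B')) n
        + ‖(A'.comp S).comp B' - (((A'.comp A).comp R).comp (B.comp B'))‖ :=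
        approxNum_le_add_norm_sub _ _ n
    _ = approxNum (((A'.comp A).comp R).comp (B.comp B')) n
        + ‖(A'.comp (S - (A.comp R).comp B)).comp B'‖ := by
        congr 2; ext; simp
    _ ≤ hilbertNum R n + ε := add_le_add (approxNum_le_hilbertNum hBB' hA'A R n)
        ((norm_comp_comp_le_of_norm_le_one hB' hA' _).trans hSR)

end SNumbers

section CStarAlgebra

lemma norm_mul_sq_le_of_mul_star_self_le {B : Type*} [NonUnitalCStarAlgebra B] [PartialOrder B]
    [StarOrderedRing B] {z m : B} (h : z * star z ≤ m) (u : B) :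
    ‖u * z‖ ^ 2 ≤ ‖u * m * star u‖ := by
  rw [sq, ← CStarRing.norm_self_mul_star, star_mul, ← mul_assoc, mul_assoc u]
  exact CStarAlgebra.norm_le_norm_of_nonneg_of_le
    (star_right_conjugate_nonneg (mul_star_self_nonneg z) u) (star_right_conjugate_le_conjugate h u)

lemma norm_mul_sq_le_of_star_mul_self_le {B : Type*} [NonUnitalCStarAlgebra B] [PartialOrder B]
    [StarOrderedRing B] {z m : B} (h : star z * z ≤ m) (u : B) :
    ‖z * u‖ ^ 2 ≤ ‖star u * m * u‖ := by
  simpa [← star_mul] using norm_mul_sq_le_of_mul_star_self_le (z := star z) (by simpa) (star u)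

variable {B : Type*} [CStarAlgebra B] [PartialOrder B] [StarOrderedRing B] {m : B} {δ : ℝ}

lemma ContinuousOn.div_add_spectrum {f : ℝ → ℝ} (hf : ContinuousOn f (spectrum ℝ m))
    (hm : 0 ≤ m) (hδ : 0 < δ) : ContinuousOn (fun t => f t / (t + δ)) (spectrum ℝ m) :=
  hf.div (continuousOn_id.add continuousOn_const) fun _ ht =>
    (add_pos_of_nonneg_of_pos (spectrum_nonneg_of_nonneg hm ht) hδ).ne'

lemma norm_cfc_div_add_le_one (hm : 0 ≤ m) (hδ : 0 < δ) :
    ‖cfc (fun t : ℝ => t / (t + δ)) m‖ ≤ 1 := by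
  refine norm_cfc_le zero_le_one fun t ht => ?_
  have ht₀ := spectrum_nonneg_of_nonneg hm ht
  rw [Real.norm_of_nonneg (by positivity), div_le_one (by positivity)]
  linarith

lemma smul_cfc_div_add (hm : 0 ≤ m) (hδ : 0 < δ) :
    δ • cfc (fun t : ℝ => t / (t + δ)) m = m - cfc (fun t : ℝ => t / (t + δ)) m * m := by
  have hg : ContinuousOn (fun t : ℝ => t / (t + δ)) (spectrum ℝ m) :=
    continuousOn_id.div_add_spectrum hm hδ
  calc δ • cfc (fun t : ℝ => t / (t + δ)) m = cfc (fun t : ℝ => t - t / (t + δ) * t) m := by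
        rw [← cfc_smul δ _ m hg]
        refine cfc_congr fun t ht => ?_
        have hne : t + δ ≠ 0 := (add_pos_of_nonneg_of_pos (spectrum_nonneg_of_nonneg hm ht) hδ).ne'
        rw [smul_eq_mul]
        field_simp
        ring
    _ = m - cfc (fun t : ℝ => t / (t + δ)) m * m := by
        rw [cfc_sub (fun t : ℝ => t) (fun t : ℝ => t / (t + δ) * t) m (continuousOn_id' _)
          (hg.mul (continuousOn_id' _)), cfc_mul _ (fun t : ℝ => t) m hg (continuousOn_id' _),
          cfc_id' ℝ m]

lemma norm_one_sub_cfc_div_add_mul_mul_le (hm : 0 ≤ m) (hδ : 0 < δ) :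
    ‖(1 - cfc (fun t : ℝ => t / (t + δ)) m) * m * (1 - cfc (fun t : ℝ => t / (t + δ)) m)‖ ≤ δ := by
  have hu : ContinuousOn (fun t : ℝ => δ / (t + δ)) (spectrum ℝ m) :=
    continuousOn_const.div_add_spectrum hm hδ
  have h1 : 1 - cfc (fun t : ℝ => t / (t + δ)) m = cfc (fun t : ℝ => δ / (t + δ)) m := by
    rw [← cfc_one ℝ m, ← cfc_sub (1 : ℝ → ℝ) (fun t : ℝ => t / (t + δ)) m continuousOn_const
      ((continuousOn_id' _).div_add_spectrum hm hδ)]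
    refine cfc_congr fun t ht => ?_
    have hne : t + δ ≠ 0 := (add_pos_of_nonneg_of_pos (spectrum_nonneg_of_nonneg hm ht) hδ).ne'
    field_simp
    simp
  have h2 : cfc (fun t : ℝ => δ / (t + δ)) m * m * cfc (fun t : ℝ => δ / (t + δ)) m
      = cfc (fun t : ℝ => δ / (t + δ) * t * (δ / (t + δ))) m := by
    rw [cfc_mul (fun t : ℝ => δ / (t + δ) * t) (fun t : ℝ => δ / (t + δ)) m
      (hu.mul (continuousOn_id' _)) hu, cfc_mul (fun t : ℝ => δ / (t + δ)) (fun t : ℝ => t) m hu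
      (continuousOn_id' _), cfc_id' ℝ m]
  rw [h1, h2]
  refine norm_cfc_le hδ.le fun t ht => ?_
  have ht₀ := spectrum_nonneg_of_nonneg hm ht
  have hδt : δ / (t + δ) ≤ 1 := (div_le_one (by positivity)).2 (by linarith)
  have htt : t / (t + δ) ≤ 1 := (div_le_one (by positivity)).2 (by linarith)
  calc ‖δ / (t + δ) * t * (δ / (t + δ))‖ = δ * (δ / (t + δ) * (t / (t + δ))) := by
        rw [Real.norm_of_nonneg (by positivity)]; ring
    _ ≤ δ * (1 * 1) := by gcongr
    _ = δ := by ring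

end CStarAlgebra

section Ideal

open Unitization
open scoped CStarAlgebra

variable {A : Type*} [NonUnitalCStarAlgebra A]

theorem exists_mem_ideal_forall_norm_sub_mul_le (J : Submodule ℂ A)
    (hJl : ∀ a : A, ∀ x ∈ J, a * x ∈ J) (hJr : ∀ a : A, ∀ x ∈ J, x * a ∈ J)
    (s : Finset A) (hs : ∀ x ∈ s, x ∈ J) {ε : ℝ} (hε : 0 < ε) :
    ∃ e ∈ J, ‖e‖ ≤ 1 ∧ ∀ x ∈ s, ‖x - e * x‖ ≤ ε ∧ ‖x - x * e‖ ≤ ε := by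
  set m : A := ∑ x ∈ s, (x * star x + star x * x)
  have hmJ : m ∈ J :=
    J.sum_mem fun x hx => J.add_mem (hJr _ x (hs x hx)) (hJl _ x (hs x hx))
  have hm_inr : (m : A⁺¹) = ∑ x ∈ s, ((x : A⁺¹) * star (x : A⁺¹) + star (x : A⁺¹) * x) := by
    change inrNonUnitalStarAlgHom ℂ A m = _
    simp [m]
  have hsummand : ∀ x : A, 0 ≤ (x : A⁺¹) * star (x : A⁺¹) + star (x : A⁺¹) * x := fun x =>
    add_nonneg (mul_star_self_nonneg _) (star_mul_self_nonneg _)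
  have hle : ∀ x ∈ s, (x : A⁺¹) * star (x : A⁺¹) + star (x : A⁺¹) * x ≤ m := fun x hx =>
    hm_inr ▸ Finset.single_le_sum (fun y _ => hsummand y) hx
  have hm : 0 ≤ (m : A⁺¹) := hm_inr ▸ Finset.sum_nonneg fun y _ => hsummand y
  have hδ : 0 < ε ^ 2 := by positivity
  set e : A := cfcₙ (fun t : ℝ => t / (t + ε ^ 2)) m
  have he : (e : A⁺¹) = cfc (fun t : ℝ => t / (t + ε ^ 2)) (m : A⁺¹) :=
    real_cfcₙ_eq_cfc_inr m _ (by simp)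
  have hu : star (1 - (e : A⁺¹)) = 1 - e := by
    rw [he, star_sub, star_one, (cfc_predicate _ _ : IsSelfAdjoint _).star_eq]
  have humu : ‖(1 - (e : A⁺¹)) * m * (1 - e)‖ ≤ ε ^ 2 :=
    he ▸ norm_one_sub_cfc_div_add_mul_mul_le hm hδ
  refine ⟨e, ?_, ?_, fun x hx => ⟨?_, ?_⟩⟩
  · have hsmul : (ε ^ 2) • e = m - e * m :=
      inr_injective (R := ℂ) (by simpa [he] using smul_cfc_div_add hm hδ)
    rw [show e = (ε ^ 2)⁻¹ • (m - e * m) by rw [← hsmul, inv_smul_smul₀ hδ.ne']]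
    exact J.smul_of_tower_mem _ (J.sub_mem hmJ (hJl e m hmJ))
  · rw [← norm_inr (𝕜 := ℂ), he]
    exact norm_cfc_div_add_le_one hm hδ
  · have h := norm_mul_sq_le_of_mul_star_self_le
      ((le_add_of_nonneg_right (star_mul_self_nonneg _)).trans (hle x hx)) (1 - (e : A⁺¹))
    rw [hu] at h
    rw [← norm_inr (𝕜 := ℂ), inr_sub, inr_mul, ← one_sub_mul]
    exact pow_le_pow_iff_left₀ (norm_nonneg _) hε.le two_ne_zero |>.1 (h.trans humu)
  · have h := norm_mul_sq_le_of_star_mul_self_le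
      ((le_add_of_nonneg_left (mul_star_self_nonneg _)).trans (hle x hx)) (1 - (e : A⁺¹))
    rw [hu] at h
    rw [← norm_inr (𝕜 := ℂ), inr_sub, inr_mul, ← mul_one_sub]
    exact pow_le_pow_iff_left₀ (norm_nonneg _) hε.le two_ne_zero |>.1 (h.trans humu)

end Ideal

section Mop

variable {A : Type*} [NonUnitalNormedRing A] [NormedSpace ℂ A] [IsScalarTower ℂ A A]
  [SMulCommClass ℂ A A]

lemma Mop_apply (a b x : A) : Mop a b x = a * x * b := (mul_assoc a x b).symm

lemma norm_Mop_le (a b : A) : ‖Mop a b‖ ≤ ‖a‖ * ‖b‖ :=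
  ContinuousLinearMap.opNorm_le_bound _ (by positivity) fun x => by
    rw [Mop_apply]
    calc ‖a * x * b‖ ≤ ‖a‖ * ‖x‖ * ‖b‖ := norm_mul₃_le
      _ = ‖a‖ * ‖b‖ * ‖x‖ := by ring

lemma norm_Mop_sub_Mop_le (a b a' b' : A) :
    ‖Mop a b - Mop a' b'‖ ≤ ‖a - a'‖ * ‖b‖ + ‖a'‖ * ‖b - b'‖ :=
  ContinuousLinearMap.opNorm_le_bound _ (by positivity) fun x => by
    rw [sub_apply, Mop_apply, Mop_apply,
      show a * x * b - a' * x * b' = (a - a') * x * b + a' * x * (b - b') by noncomm_ring]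
    calc ‖(a - a') * x * b + a' * x * (b - b')‖
        ≤ ‖a - a'‖ * ‖x‖ * ‖b‖ + ‖a'‖ * ‖x‖ * ‖b - b'‖ :=
          (norm_add_le _ _).trans (add_le_add norm_mul₃_le norm_mul₃_le)
      _ = (‖a - a'‖ * ‖b‖ + ‖a'‖ * ‖b - b'‖) * ‖x‖ := by ring

end Mop

section MopIdeal

variable {A : Type*} [NonUnitalCStarAlgebra A] {J : Submodule ℂ A} {a b : A}

lemma exists_mem_ideal_norm_Mop_sub_le (hJl : ∀ a : A, ∀ x ∈ J, a * x ∈ J)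
    (hJr : ∀ a : A, ∀ x ∈ J, x * a ∈ J) (ha : a ∈ J) (hb : b ∈ J) {ε : ℝ} (hε : 0 < ε) :
    ∃ e ∈ J, ‖e‖ ≤ 1 ∧ ‖Mop a b - Mop (e * a) (b * e)‖ ≤ ε ∧
      ‖Mop a b - Mop (a * e) (e * b)‖ ≤ ε := by
  classical
  set ε' := ε / (‖a‖ + ‖b‖ + 1)
  have hε' : 0 < ε' := by positivity
  obtain ⟨e, heJ, he, hab⟩ := exists_mem_ideal_forall_norm_sub_mul_le J hJl hJr {a, b}
    (by simp [ha, hb]) hε'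
  obtain ⟨hea, hae⟩ := hab a (by simp)
  obtain ⟨heb, hbe⟩ := hab b (by simp)
  have hbound : ε' * ‖b‖ + ‖a‖ * ε' ≤ ε :=
    calc ε' * ‖b‖ + ‖a‖ * ε' = ε' * (‖a‖ + ‖b‖) := by ring
      _ ≤ ε' * (‖a‖ + ‖b‖ + 1) := mul_le_mul_of_nonneg_left (by linarith) hε'.le
      _ = ε := div_mul_cancel₀ _ (by positivity)
  refine ⟨e, heJ, he, ?_, ?_⟩
  · calc ‖Mop a b - Mop (e * a) (b * e)‖ ≤ ‖a - e * a‖ * ‖b‖ + ‖e * a‖ * ‖b - b * e‖ :=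
          norm_Mop_sub_Mop_le _ _ _ _
      _ ≤ ε' * ‖b‖ + ‖a‖ * ε' := by
          gcongr
          exact (norm_mul_le _ _).trans (mul_le_of_le_one_left (norm_nonneg _) he)
      _ ≤ ε := hbound
  · calc ‖Mop a b - Mop (a * e) (e * b)‖ ≤ ‖a - a * e‖ * ‖b‖ + ‖a * e‖ * ‖b - e * b‖ :=
          norm_Mop_sub_Mop_le _ _ _ _
      _ ≤ ε' * ‖b‖ + ‖a‖ * ε' := by
          gcongr
          exact (norm_mul_le _ _).trans (mul_le_of_le_one_right (norm_nonneg _) he)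
      _ ≤ ε := hbound

lemma norm_codRestrict_Mop_le {e : A} (he : ‖e‖ ≤ 1) (h : ∀ x, Mop e e x ∈ J) :
    ‖(Mop e e).codRestrict J h‖ ≤ 1 :=
  ContinuousLinearMap.opNorm_le_bound _ zero_le_one fun x =>
    calc ‖Mop e e x‖ ≤ ‖Mop e e‖ * ‖x‖ := (Mop e e).le_opNorm x
      _ ≤ 1 * ‖x‖ := by
          gcongr
          exact (norm_Mop_le e e).trans (mul_le_one₀ he (norm_nonneg e) he)

lemma Mop_self_apply_mem (hJr : ∀ a : A, ∀ x ∈ J, x * a ∈ J) {e : A} (he : e ∈ J) (x : A) :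
    Mop e e x ∈ J :=
  Mop_apply e e x ▸ hJr e _ (hJr x e he)

lemma approxFactorsThrough_restrict_Mop (hJl : ∀ a : A, ∀ x ∈ J, a * x ∈ J)
    (hJr : ∀ a : A, ∀ x ∈ J, x * a ∈ J) (ha : a ∈ J) (hb : b ∈ J) {T : J →L[ℂ] J}
    (hT : ∀ x : J, (T x : A) = a * (x : A) * b) : ApproxFactorsThrough T (Mop a b) := by
  intro ε hε
  obtain ⟨e, heJ, he, hε', -⟩ := exists_mem_ideal_norm_Mop_sub_le hJl hJr ha hb hε
  set S := (Mop e e).codRestrict J (Mop_self_apply_mem hJr heJ)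
  refine ⟨J.subtypeL, S, Submodule.norm_subtypeL_le J, norm_codRestrict_Mop_le he _, ?_⟩
  refine ContinuousLinearMap.opNorm_le_bound _ hε.le fun x => ?_
  have hx : ((T - (S.comp (Mop a b)).comp J.subtypeL) x : A)
      = (Mop a b - Mop (e * a) (b * e)) x := by
    simp [S, hT, Mop_apply, mul_assoc]
  calc ‖(T - (S.comp (Mop a b)).comp J.subtypeL) x‖ = ‖(Mop a b - Mop (e * a) (b * e)) x‖ :=
        congrArg norm hx
    _ ≤ ‖Mop a b - Mop (e * a) (b * e)‖ * ‖x‖ := ContinuousLinearMap.le_opNorm _ _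
    _ ≤ ε * ‖x‖ := by gcongr

lemma approxFactorsThrough_Mop_restrict (hJl : ∀ a : A, ∀ x ∈ J, a * x ∈ J)
    (hJr : ∀ a : A, ∀ x ∈ J, x * a ∈ J) (ha : a ∈ J) (hb : b ∈ J) {T : J →L[ℂ] J}
    (hT : ∀ x : J, (T x : A) = a * (x : A) * b) : ApproxFactorsThrough (Mop a b) T := by
  intro ε hε
  obtain ⟨e, heJ, he, -, hε'⟩ := exists_mem_ideal_norm_Mop_sub_le hJl hJr ha hb hε
  set S := (Mop e e).codRestrict J (Mop_self_apply_mem hJr heJ)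
  refine ⟨S, J.subtypeL, norm_codRestrict_Mop_le he _, Submodule.norm_subtypeL_le J, ?_⟩
  have hTS : (J.subtypeL.comp T).comp S = Mop (a * e) (e * b) := by
    ext x
    simp [S, hT, Mop_apply, mul_assoc]
  rwa [hTS]

end MopIdeal

theorem sNumbers_Mop_ideal_general {A : Type u} [NonUnitalNormedRing A] [StarRing A]
    [CStarRing A] [NormedSpace ℂ A] [IsScalarTower ℂ A A] [SMulCommClass ℂ A A]
    [StarModule ℂ A] [CompleteSpace A]
    (J : Submodule ℂ A)
    (hJl : ∀ a : A, ∀ x ∈ J, a * x ∈ J) (hJr : ∀ a : A, ∀ x ∈ J, x * a ∈ J)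
    (a b : A) (ha : a ∈ J) (hb : b ∈ J)
    (T : J →L[ℂ] J) (hT : ∀ x : J, (T x : A) = a * (x : A) * b) :
    ∀ n : ℕ, 1 ≤ n →
      hilbertNum T n ≤ hilbertNum (Mop a b) n ∧
      hilbertNum (Mop a b) n ≤ approxNum (Mop a b) n ∧
      approxNum (Mop a b) n ≤ approxNum T n := by
  intro n _
  let _ : NonUnitalCStarAlgebra A := {}
  exact ⟨hilbertNum_le_of_approxFactorsThrough
      (approxFactorsThrough_restrict_Mop hJl hJr ha hb hT) n,
    hilbertNum_le_approxNum _ n,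
    approxNum_le_of_approxFactorsThrough (approxFactorsThrough_Mop_restrict hJl hJr ha hb hT) n⟩

/-- Let `𝒜` be a C*-algebra, `𝒥` a closed two-sided ideal of `𝒜` and
`a, b ∈ 𝒥`.  Then for every `n ≥ 1`:
`hₙ(M_{a,b}^𝒥) ≤ hₙ(M_{a,b}) ≤ aₙ(M_{a,b}) ≤ aₙ(M_{a,b}^𝒥)`. -/
theorem sNumbers_Mop_ideal {A : Type u} [NonUnitalNormedRing A] [StarRing A]
    [CStarRing A] [NormedSpace ℂ A] [IsScalarTower ℂ A A] [SMulCommClass ℂ A A]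
    [StarModule ℂ A] [CompleteSpace A]
    (J : Submodule ℂ A) (hJclosed : IsClosed (J : Set A))
    (hJl : ∀ a : A, ∀ x ∈ J, a * x ∈ J) (hJr : ∀ a : A, ∀ x ∈ J, x * a ∈ J)
    (a b : A) (ha : a ∈ J) (hb : b ∈ J)
    (T : J →L[ℂ] J) (hT : ∀ x : J, (T x : A) = a * (x : A) * b) :
    ∀ n : ℕ, 1 ≤ n →
      hilbertNum T n ≤ hilbertNum (Mop a b) n ∧
      hilbertNum (Mop a b) n ≤ approxNum (Mop a b) n ∧
      approxNum (Mop a b) n ≤ approxNum T n :=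
  sNumbers_Mop_ideal_general J hJl hJr a b ha hb T hT
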